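/- arXiv:2311.13323 — 3 statements merged into one kernel-verified Lean document; each statement's English description precedes it below -/
import Mathlib

section
/- Let G be a connected graph with Perron vector x, and let u, v be vertices with x_u ≥ x_v. Let N be a nonempty set of neighbors of v which are not neighbors of u and do not include u. Then the graph G′ obtained from G by deleting all edges vw with w ∈ N and adding all edges uw with w ∈ N satisfies ρ(G′) > ρ(G). -/
/-!
Moving the edges `vw`, `w ∈ N`, to `uw` adds to the adjacency matrix `A` a symmetric matrix whose
quadratic form at `x` is `2 (x_u - x_v) ∑_{w ∈ N} x_w ≥ 0`, so the Rayleigh quotient of the new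
adjacency matrix `A'` at `x` is at least `ρ(G)`; hence `ρ(G') ≥ ρ(G)`. Equality would force `x` to be
an eigenvector of `A'` for `ρ(G)`, which fails at `v`: `(A' x)_v = ρ(G) x_v - ∑_{w ∈ N} x_w`.
-/

open Matrix

/-- The spectral radius (largest adjacency eigenvalue) of a finite simple graph. -/
noncomputable def specRad {V : Type*} [Finite V] (G : SimpleGraph V) : ℝ :=
  letI := Fintype.ofFinite V
  letI := Classical.decEq V
  letI := Classical.decRel G.Adj
  sSup (spectrum ℝ (G.adjMatrix ℝ))

theorem specRad_eq_sSup_spectrum {V : Type*} [Fintype V] [DecidableEq V] (G : SimpleGraph V)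
    [DecidableRel G.Adj] : specRad G = sSup (spectrum ℝ (G.adjMatrix ℝ)) := by
  unfold specRad
  congr!

namespace Matrix.IsHermitian

variable {n : Type*} [Fintype n] [DecidableEq n] {A : Matrix n n ℝ}

open scoped MatrixOrder in
theorem posSemidef_sSup_spectrum_smul_one_sub (hA : A.IsHermitian) :
    (sSup (spectrum ℝ A) • (1 : Matrix n n ℝ) - A).PosSemidef := by
  have := le_algebraMap_of_spectrum_le (a := A) (r := sSup (spectrum ℝ A))
    (fun μ hμ => le_csSup A.finite_real_spectrum.bddAbove hμ) hA.isSelfAdjoint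
  rwa [Algebra.algebraMap_eq_smul_one] at this

theorem lt_sSup_spectrum_of_le_dotProduct_mulVec (hA : A.IsHermitian) {c : ℝ} {x : n → ℝ}
    (hle : c * (x ⬝ᵥ x) ≤ x ⬝ᵥ A *ᵥ x) (hne : A *ᵥ x ≠ c • x) : c < sSup (spectrum ℝ A) := by
  set ρ := sSup (spectrum ℝ A)
  have hB := hA.posSemidef_sSup_spectrum_smul_one_sub
  have hquad : x ⬝ᵥ (ρ • (1 : Matrix n n ℝ) - A) *ᵥ x = ρ * (x ⬝ᵥ x) - x ⬝ᵥ A *ᵥ x := by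
    simp [sub_mulVec, dotProduct_sub, smul_mulVec, dotProduct_smul]
  have hx : 0 < x ⬝ᵥ x := by
    refine lt_of_le_of_ne (dotProduct_self_star_nonneg x) fun h => hne ?_
    rw [eq_comm, dotProduct_self_eq_zero] at h
    simp [h]
  by_contra! hρc
  have hzero : x ⬝ᵥ (ρ • (1 : Matrix n n ℝ) - A) *ᵥ x = 0 := by
    have := hB.dotProduct_mulVec_nonneg x
    simp only [star_trivial] at this
    nlinarith
  have hAx : A *ᵥ x = ρ • x := by
    have := (hB.dotProduct_mulVec_zero_iff x).mp (by simpa using hzero)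
    rwa [sub_mulVec, smul_mulVec, one_mulVec, sub_eq_zero, eq_comm] at this
  have hρ : ρ = c := by
    rw [hquad] at hzero
    nlinarith
  exact hne (hρ ▸ hAx)

end Matrix.IsHermitian

namespace SimpleGraph

variable {V : Type*}

def moveEdges (G : SimpleGraph V) (v u : V) (N : Set V) : SimpleGraph V :=
  G.deleteEdges {e | ∃ w ∈ N, e = s(v, w)} ⊔ fromEdgeSet {e | ∃ w ∈ N, e = s(u, w)}

theorem moveEdges_adj {G : SimpleGraph V} {v u : V} {N : Set V} {a b : V} :
    (G.moveEdges v u N).Adj a b ↔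
      G.Adj a b ∧ ¬(a = v ∧ b ∈ N) ∧ ¬(b = v ∧ a ∈ N) ∨
        a ≠ b ∧ (a = u ∧ b ∈ N ∨ b = u ∧ a ∈ N) := by
  simp only [moveEdges, sup_adj, deleteEdges_adj, fromEdgeSet_adj, Set.mem_ofPred_eq, Sym2.eq_iff]
  grind

variable [DecidableEq V] (R : Type*)

def starAdjMatrix [AddMonoidWithOne R] (w : V) (s : Finset V) : Matrix V V R :=
  of fun a b => ((if a = w ∧ b ∈ s then 1 else 0) + if b = w ∧ a ∈ s then 1 else 0 : R)

variable {R} {w : V} {s : Finset V}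

theorem adjMatrix_moveEdges [Ring R] (G : SimpleGraph V) [DecidableRel G.Adj] {v u : V}
    [DecidableRel (G.moveEdges v u s).Adj]
    (hs : ↑s ⊆ G.neighborSet v \ (G.neighborSet u ∪ {u})) :
    (G.moveEdges v u s).adjMatrix R =
      G.adjMatrix R + starAdjMatrix R u s - starAdjMatrix R v s := by
  have hv : ∀ w ∈ s, G.Adj v w := fun w hw => (hs hw).1
  have hv' : ∀ w ∈ s, G.Adj w v := fun w hw => (hv w hw).symm
  have hu : ∀ w ∈ s, ¬G.Adj u w := fun w hw h => (hs hw).2 (Or.inl h)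
  have hu' : ∀ w ∈ s, ¬G.Adj w u := fun w hw h => hu w hw h.symm
  have hus : u ∉ s := fun h => (hs h).2 (Or.inr rfl)
  have hvs : v ∉ s := fun h => G.irrefl (hv v h)
  ext a b
  simp only [adjMatrix_apply, moveEdges_adj, starAdjMatrix, of_apply, Matrix.add_apply,
    Matrix.sub_apply, Finset.mem_coe]
  split_ifs <;> grind

variable [Fintype V]

theorem starAdjMatrix_mulVec_apply [NonAssocSemiring R] (x : V → R) (a : V) :
    (starAdjMatrix R w s *ᵥ x) a =
      (if a = w then ∑ b ∈ s, x b else 0) + if a ∈ s then x w else 0 := by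
  simp only [starAdjMatrix, mulVec, dotProduct, of_apply, add_mul, ite_mul, one_mul, zero_mul,
    Finset.sum_add_distrib, ite_and, Finset.sum_ite_eq', Finset.mem_univ, if_true]
  congr 1
  split_ifs <;> simp [Finset.sum_ite_mem]

theorem dotProduct_starAdjMatrix_mulVec [CommSemiring R] (x : V → R) :
    x ⬝ᵥ starAdjMatrix R w s *ᵥ x = 2 * x w * ∑ b ∈ s, x b := by
  simp only [dotProduct, starAdjMatrix_mulVec_apply, mul_add, mul_ite, mul_zero,
    Finset.sum_add_distrib, Finset.sum_ite_eq', Finset.mem_univ, if_true, Finset.sum_ite_mem,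
    Finset.univ_inter]
  rw [← Finset.sum_mul]
  ring

end SimpleGraph

theorem stmt_12_general {V : Type*} [Fintype V] [DecidableEq V] (G : SimpleGraph V)
    [DecidableRel G.Adj]
    (x : V → ℝ) (hxpos : ∀ w, 0 < x w)
    (hx : (G.adjMatrix ℝ).mulVec x = specRad G • x)
    (u v : V) (huv : x v ≤ x u)
    (N : Set V) (hN : N.Nonempty)
    (hNsub : N ⊆ G.neighborSet v \ (G.neighborSet u ∪ {u})) :
    specRad G <
      specRad ((G.deleteEdges {e | ∃ w ∈ N, e = s(v, w)}) ⊔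
        SimpleGraph.fromEdgeSet {e | ∃ w ∈ N, e = s(u, w)}) := by
  classical
  obtain ⟨s, rfl⟩ := N.toFinite.exists_finset_coe
  obtain ⟨w₀, hw₀⟩ := hN
  have hvs : v ∉ s := fun h => G.irrefl (hNsub h).1
  have hvu : v ≠ u := by
    rintro rfl
    exact (hNsub hw₀).2 (Or.inl (hNsub hw₀).1)
  have hX : 0 < ∑ w ∈ s, x w := Finset.sum_pos (fun w _ => hxpos w) ⟨w₀, hw₀⟩
  have hA' := G.adjMatrix_moveEdges (R := ℝ) hNsub
  change specRad G < specRad (G.moveEdges v u s)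
  rw [specRad_eq_sSup_spectrum (G.moveEdges v u s)]
  refine ((G.moveEdges v u s).isHermitian_adjMatrix ℝ).lt_sSup_spectrum_of_le_dotProduct_mulVec
    (x := x) ?_ ?_
  · rw [hA', sub_mulVec, add_mulVec, dotProduct_sub, dotProduct_add, hx, dotProduct_smul,
      SimpleGraph.dotProduct_starAdjMatrix_mulVec, SimpleGraph.dotProduct_starAdjMatrix_mulVec,
      smul_eq_mul]
    nlinarith [mul_le_mul_of_nonneg_right huv hX.le]
  · intro h
    have hv := congrFun h v
    rw [hA', sub_mulVec, add_mulVec, Pi.sub_apply, Pi.add_apply, hx,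
      SimpleGraph.starAdjMatrix_mulVec_apply, SimpleGraph.starAdjMatrix_mulVec_apply] at hv
    simp only [Pi.smul_apply, smul_eq_mul, hvu, ↓reduceIte, hvs, add_zero, sub_eq_self] at hv
    linarith

theorem stmt_12 {V : Type*} [Fintype V] [DecidableEq V] (G : SimpleGraph V)
    [DecidableRel G.Adj] (hG : G.Connected)
    (x : V → ℝ) (hxpos : ∀ w, 0 < x w) (hxunit : ∑ w, x w ^ 2 = 1)
    (hx : (G.adjMatrix ℝ).mulVec x = specRad G • x)
    (u v : V) (huv : x v ≤ x u)
    (N : Set V) (hN : N.Nonempty)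
    (hNsub : N ⊆ G.neighborSet v \ (G.neighborSet u ∪ {u})) :
    specRad G <
      specRad ((G.deleteEdges {e | ∃ w ∈ N, e = s(v, w)}) ⊔
        SimpleGraph.fromEdgeSet {e | ∃ w ∈ N, e = s(u, w)}) :=
  stmt_12_general G x hxpos hx u v huv N hN hNsub
end

section
/- Let n ≥ 6 be even, and let G be the graph obtained from the friendship graph F_{(n−2)/2} by attaching a pendant edge at the central vertex (the vertex adjacent to all others). Then ρ(G) < √(2n−4). -/
/-- The friendship graph `F_k` (with central vertex `0` and the `k` triangles formed by the
pairs `{2i+1, 2i+2}` for `0 ≤ i < k`) together with a pendant edge attached at the central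
vertex: the extra vertex `2k+1` is adjacent only to the center `0`. -/
def friendshipPendant (k : ℕ) : SimpleGraph (Fin (2 * k + 2)) :=
  SimpleGraph.fromRel (fun i j => i.val = 0 ∨
    (1 ≤ i.val ∧ i.val ≤ 2 * k ∧ 1 ≤ j.val ∧ j.val ≤ 2 * k ∧
      (i.val - 1) / 2 = (j.val - 1) / 2))

/-!
A positive vector `w` with `A w ≤ t • w` entrywise forces every eigenvalue of `A` into `[-t, t]`
(weighted Gershgorin bound). On `friendshipPendant k` take weight `1` at the hub, `1 / t` at the
pendant vertex and `1 / (t - 1)` at the `2k` triangle vertices: the pendant and triangle rows are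
then tight, and the hub row asks for `1 / t + 2k / (t - 1) ≤ t`. For `k ≥ 2` this holds at
`t = √(4k - 1/2)`, which is below `√(4k) ≤ √(2n - 4)`.
-/

open Finset Matrix

theorem Matrix.abs_le_of_mem_spectrum_of_sum_abs_mul_le {ι : Type*} [Fintype ι] [DecidableEq ι]
    {M : Matrix ι ι ℝ} {w : ι → ℝ} {t μ : ℝ} (hw : ∀ i, 0 < w i)
    (hrow : ∀ i, ∑ j, |M i j| * w j ≤ t * w i) (hμ : μ ∈ spectrum ℝ M) : |μ| ≤ t := by
  rw [← Matrix.spectrum_toLin', ← Module.End.hasEigenvalue_iff_mem_spectrum] at hμ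
  obtain ⟨v, hv, hv0⟩ := hμ.exists_hasEigenvector
  have hMv : M *ᵥ v = μ • v := Module.End.mem_eigenspace_iff.mp hv
  obtain ⟨j₀, hj₀⟩ := Function.ne_iff.mp hv0
  obtain ⟨i, -, hi⟩ := exists_max_image univ (fun j => |v j| / w j) ⟨j₀, mem_univ j₀⟩
  set c := |v i| / w i
  have hc : 0 < c := (div_pos (abs_pos.mpr hj₀) (hw j₀)).trans_le (hi j₀ (mem_univ j₀))
  have hv_le : ∀ j, |v j| ≤ c * w j := fun j => (div_le_iff₀ (hw j)).mp (hi j (mem_univ j))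
  have hvi : |v i| = c * w i := by simp only [c]; field_simp [(hw i).ne']
  have key : |μ| * (c * w i) ≤ t * (c * w i) :=
    calc |μ| * (c * w i) = |∑ j, M i j * v j| := by
          rw [← hvi, ← abs_mul, ← smul_eq_mul, ← Pi.smul_apply, ← hMv]; rfl
      _ ≤ ∑ j, |M i j| * |v j| := by
          simpa only [abs_mul] using abs_sum_le_sum_abs (fun j => M i j * v j) univ
      _ ≤ ∑ j, |M i j| * (c * w j) := by gcongr with j; exact hv_le j
      _ = c * ∑ j, |M i j| * w j := by rw [mul_sum]; congr! 1 with j; ring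
      _ ≤ c * (t * w i) := by gcongr; exact hrow i
      _ = t * (c * w i) := by ring
  exact le_of_mul_le_mul_right key (mul_pos hc (hw i))

theorem specRad_le_of_forall_sum_neighborFinset_le {V : Type*} [Fintype V] (G : SimpleGraph V)
    [DecidableRel G.Adj] {w : V → ℝ} {t : ℝ} (hw : ∀ v, 0 < w v) (ht : 0 ≤ t)
    (h : ∀ v, ∑ u ∈ G.neighborFinset v, w u ≤ t * w v) : specRad G ≤ t := by
  classical
  have hspec : specRad G = sSup (spectrum ℝ (G.adjMatrix ℝ)) := by unfold specRad; congr!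
  rw [hspec]
  refine Real.sSup_le (fun μ hμ => (le_abs_self μ).trans ?_) ht
  refine Matrix.abs_le_of_mem_spectrum_of_sum_abs_mul_le hw (fun v => ?_) hμ
  have habs : ∀ u, |G.adjMatrix ℝ v u| = G.adjMatrix ℝ v u := fun u =>
    abs_of_nonneg (by rw [SimpleGraph.adjMatrix_apply]; split_ifs <;> norm_num)
  simpa only [habs, ← G.adjMatrix_mulVec_apply, mulVec, dotProduct] using h v

namespace friendshipPendant

variable {k : ℕ}

theorem adj_iff {i j : Fin (2 * k + 2)} :
    (friendshipPendant k).Adj i j ↔ i ≠ j ∧ (i.val = 0 ∨ j.val = 0 ∨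
      (1 ≤ i.val ∧ i.val ≤ 2 * k ∧ 1 ≤ j.val ∧ j.val ≤ 2 * k ∧
        (i.val - 1) / 2 = (j.val - 1) / 2)) := by
  simp only [friendshipPendant, SimpleGraph.fromRel_adj]
  omega

noncomputable def weight (k : ℕ) (t : ℝ) (v : Fin (2 * k + 2)) : ℝ :=
  if v.val = 0 then 1 else if v.val = 2 * k + 1 then t⁻¹ else (t - 1)⁻¹

theorem weight_of_mem_triangle {t : ℝ} {v : Fin (2 * k + 2)} (hv₁ : 1 ≤ v.val)
    (hv₂ : v.val ≤ 2 * k) : weight k t v = (t - 1)⁻¹ := by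
  rw [weight, if_neg (by omega), if_neg (by omega)]

@[simp]
theorem weight_zero (t : ℝ) : weight k t 0 = 1 := by simp [weight]

@[simp]
theorem weight_last (t : ℝ) : weight k t (Fin.last _) = t⁻¹ := by simp [weight]

variable [DecidableRel (friendshipPendant k).Adj]

theorem neighborFinset_zero : (friendshipPendant k).neighborFinset 0 = univ.erase 0 := by
  ext u
  simp only [SimpleGraph.mem_neighborFinset, adj_iff, mem_erase, mem_univ, ne_eq, Fin.ext_iff,
    Fin.val_zero, true_or, and_true]
  omega

theorem neighborFinset_last : (friendshipPendant k).neighborFinset (Fin.last _) = {0} := by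
  ext u
  simp only [SimpleGraph.mem_neighborFinset, adj_iff, mem_singleton, ne_eq, Fin.ext_iff,
    Fin.val_zero, Fin.val_last]
  omega

theorem exists_neighborFinset_eq_pair {v : Fin (2 * k + 2)} (hv₁ : 1 ≤ v.val)
    (hv₂ : v.val ≤ 2 * k) : ∃ p : Fin (2 * k + 2), 1 ≤ p.val ∧ p.val ≤ 2 * k ∧
      (friendshipPendant k).neighborFinset v = {0, p} := by
  obtain ⟨m, hm⟩ : ∃ m, m = if v.val % 2 = 1 then v.val + 1 else v.val - 1 := ⟨_, rfl⟩
  have hm₁ : 1 ≤ m := by split_ifs at hm <;> omega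
  have hm₂ : m ≤ 2 * k := by split_ifs at hm <;> omega
  refine ⟨⟨m, by omega⟩, hm₁, hm₂, ?_⟩
  ext u
  simp only [SimpleGraph.mem_neighborFinset, adj_iff, mem_insert, mem_singleton, ne_eq, Fin.ext_iff,
    Fin.val_zero]
  split_ifs at hm <;> omega

theorem sum_weight_neighborFinset_zero (t : ℝ) :
    ∑ u ∈ (friendshipPendant k).neighborFinset 0, weight k t u = t⁻¹ + 2 * k * (t - 1)⁻¹ := by
  have hlast : Fin.last (2 * k + 1) ∈ univ.erase 0 :=
    mem_erase.mpr ⟨by simp [Fin.ext_iff], mem_univ _⟩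
  rw [neighborFinset_zero, ← add_sum_erase _ _ hlast, sum_eq_card_nsmul (b := (t - 1)⁻¹)]
  · rw [card_erase_of_mem hlast, card_erase_of_mem (mem_univ _), card_univ, Fintype.card_fin,
      nsmul_eq_mul, weight_last]
    push_cast
    ring
  · intro u hu
    simp only [mem_erase, ne_eq, Fin.ext_iff, Fin.val_zero, Fin.val_last, mem_univ, and_true] at hu
    exact weight_of_mem_triangle (by omega) (by omega)

theorem sum_weight_neighborFinset_last (t : ℝ) :
    ∑ u ∈ (friendshipPendant k).neighborFinset (Fin.last _), weight k t u = 1 := by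
  rw [neighborFinset_last, sum_singleton, weight_zero]

theorem sum_weight_neighborFinset_of_mem_triangle (t : ℝ) {v : Fin (2 * k + 2)} (hv₁ : 1 ≤ v.val)
    (hv₂ : v.val ≤ 2 * k) :
    ∑ u ∈ (friendshipPendant k).neighborFinset v, weight k t u = 1 + (t - 1)⁻¹ := by
  obtain ⟨p, hp₁, hp₂, hN⟩ := exists_neighborFinset_eq_pair hv₁ hv₂
  rw [hN, sum_pair (by simp [Fin.ext_iff]; omega), weight_of_mem_triangle hp₁ hp₂, weight_zero]

theorem specRad_le {t : ℝ} (ht : 1 < t) (hcenter : t⁻¹ + 2 * k * (t - 1)⁻¹ ≤ t) :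
    specRad (friendshipPendant k) ≤ t := by
  have ht₁ : 0 < t - 1 := sub_pos.mpr ht
  refine specRad_le_of_forall_sum_neighborFinset_le _ (w := weight k t) (fun v => ?_) (by linarith)
    (fun v => ?_)
  · unfold weight; split_ifs <;> positivity
  · rcases Nat.eq_zero_or_pos v.val with hv | hv
    · rw [show v = 0 from Fin.ext hv, sum_weight_neighborFinset_zero, weight_zero, mul_one]
      exact hcenter
    rcases Nat.lt_or_ge v.val (2 * k + 1) with hv' | hv'
    · rw [sum_weight_neighborFinset_of_mem_triangle t hv (by omega),
        weight_of_mem_triangle hv (by omega)]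
      have htri : t * (t - 1)⁻¹ = 1 + (t - 1)⁻¹ := by field_simp; ring
      exact htri.ge
    · rw [show v = Fin.last _ from Fin.ext (by simp; omega), sum_weight_neighborFinset_last,
        weight_last, mul_inv_cancel₀ (by positivity)]

end friendshipPendant

theorem inv_add_two_mul_mul_inv_sub_one_le_of_sq_eq {x t : ℝ} (hx : 2 ≤ x) (ht₀ : 0 ≤ t)
    (ht : t ^ 2 = 4 * x - 1 / 2) : t⁻¹ + 2 * x * (t - 1)⁻¹ ≤ t := by
  have ht₂ : 2 < t := by nlinarith
  have hnum : 8 * x - 3 ≤ (4 * x - 3) * t := by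
    have hsq : (8 * x - 3) ^ 2 ≤ ((4 * x - 3) * t) ^ 2 := by
      nlinarith [mul_nonneg (sub_nonneg.2 hx) (sq_nonneg (x - 2))]
    nlinarith
  have ht₁ : t - 1 ≠ 0 := by linarith
  have ht₀' : t ≠ 0 := by linarith
  rw [← sub_nonneg]
  have : t - (t⁻¹ + 2 * x * (t - 1)⁻¹) = ((4 * x - 3) * t - (8 * x - 3)) / (2 * t * (t - 1)) := by
    field_simp
    linear_combination 2 * (t - 1) * ht
  rw [this]
  apply div_nonneg <;> nlinarith

theorem stmt_16_general (n : ℕ) (hn : 6 ≤ n) :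
    specRad (friendshipPendant ((n - 2) / 2)) < Real.sqrt (2 * n - 4) := by
  classical
  set k := (n - 2) / 2
  have hk : (2 : ℝ) ≤ k := by exact_mod_cast (show 2 ≤ k by omega)
  have hkn : 4 * (k : ℝ) ≤ 2 * n - 4 := by
    have : (2 * k + 2 : ℝ) ≤ n := by exact_mod_cast (show 2 * k + 2 ≤ n by omega)
    linarith
  set t := √(4 * (k : ℝ) - 1 / 2)
  have ht : t ^ 2 = 4 * k - 1 / 2 := Real.sq_sqrt (by linarith)
  have ht₁ : 1 < t := by nlinarith [Real.sqrt_nonneg (4 * (k : ℝ) - 1 / 2)]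
  calc specRad (friendshipPendant k) ≤ t := friendshipPendant.specRad_le ht₁
        (inv_add_two_mul_mul_inv_sub_one_le_of_sq_eq hk (Real.sqrt_nonneg _) ht)
    _ < √(2 * n - 4) := Real.sqrt_lt_sqrt (by linarith) (by linarith)

theorem stmt_16 (n : ℕ) (hn : 6 ≤ n) (heven : Even n) :
    specRad (friendshipPendant ((n - 2) / 2)) < Real.sqrt (2 * n - 4) :=
  stmt_16_general n hn
end

section
/- Let n ≥ 6, a ≥ 2 have the same parity, with k = (n−a−2)/2 ≥ 1 an integer. Let K_{2,a} ∙ F_k be the graph obtained by identifying a vertex of K_{2,a} in the part of size a with the central vertex of the friendship graph F_k. Then ρ(K_{2,a} ∙ F_k) < √(2n−4). -/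
/-- The graph `K_{2,a} ∙ F_k`, obtained by identifying a vertex of the part of size `a`
of `K_{2,a}` with the central vertex of the friendship graph `F_k`.
Vertices `0, …, a-1` form the part of size `a` (with `0` the identified center),
vertices `a, a+1` form the part of size `2`, and vertices `a+2, …, a+1+2k` are the
leaves of the friendship graph, paired by `{a+2+2i, a+3+2i}` and all joined to `0`. -/
def KdotF (a k : ℕ) : SimpleGraph (Fin (a + 2 + 2 * k)) :=
  SimpleGraph.fromRel (fun i j =>
    (i.val < a ∧ (j.val = a ∨ j.val = a + 1)) ∨
    (i.val = 0 ∧ a + 2 ≤ j.val) ∨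
    (a + 2 ≤ i.val ∧ a + 2 ≤ j.val ∧ (i.val - (a + 2)) / 2 = (j.val - (a + 2)) / 2))

open Finset


open Finset

lemma specRad_le_of_weights {V : Type*} [Fintype V] [DecidableEq V] [Nonempty V]
    (G : SimpleGraph V) [DecidableRel G.Adj] (c : V → ℝ) (hc : ∀ v, 0 < c v)
    (b : ℝ) (hb : 0 ≤ b)
    (hrow : ∀ v, (∑ u, (if G.Adj v u then c u else 0)) ≤ b * c v) :
    sSup (spectrum ℝ (G.adjMatrix ℝ)) ≤ b := by
  apply Real.sSup_le _ hb
  intro lam hlam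
  rw [spectrum.mem_iff] at hlam
  have hdet : ((algebraMap ℝ (Matrix V V ℝ) lam) - G.adjMatrix ℝ).det = 0 := by
    by_contra h
    exact hlam ((Matrix.isUnit_iff_isUnit_det _).2 (isUnit_iff_ne_zero.2 h))
  obtain ⟨x, hx0, hx⟩ := Matrix.exists_mulVec_eq_zero_iff.2 hdet
  have hev : (G.adjMatrix ℝ).mulVec x = lam • x := by
    have : (algebraMap ℝ (Matrix V V ℝ) lam) = lam • (1 : Matrix V V ℝ) := by
      rw [Algebra.algebraMap_eq_smul_one]
    rw [this, Matrix.sub_mulVec, Matrix.smul_mulVec, Matrix.one_mulVec, sub_eq_zero] at hx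
    exact hx.symm
  obtain ⟨v₀, -, hv₀⟩ := Finset.exists_max_image univ (fun u => |x u| / c u) univ_nonempty
  set m := |x v₀| / c v₀ with hm
  have hmle : ∀ u, |x u| ≤ m * c u := by
    intro u
    have := hv₀ u (mem_univ u)
    calc |x u| = (|x u| / c u) * c u := by
          rw [div_mul_cancel₀ _ (hc u).ne']
    _ ≤ m * c u := by apply mul_le_mul_of_nonneg_right this (hc u).le
  have hmpos : 0 < m := by
    obtain ⟨u, hu⟩ := Function.ne_iff.1 hx0
    have h1 : 0 < |x u| / c u := div_pos (abs_pos.2 hu) (hc u)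
    exact lt_of_lt_of_le h1 (hv₀ u (mem_univ u))
  have key : |lam| * (m * c v₀) ≤ m * (b * c v₀) := by
    have h1 : |lam| * |x v₀| ≤ m * (b * c v₀) := by
      have h2 : |lam * x v₀| = |((G.adjMatrix ℝ).mulVec x) v₀| := by
        rw [hev]; simp
      rw [← abs_mul, h2]
      have h3 : |((G.adjMatrix ℝ).mulVec x) v₀| ≤ ∑ u, (if G.Adj v₀ u then |x u| else 0) := by
        rw [Matrix.mulVec, dotProduct]
        refine (Finset.abs_sum_le_sum_abs _ _).trans (le_of_eq ?_)
        apply Finset.sum_congr rfl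
        intro u _
        rw [SimpleGraph.adjMatrix_apply]
        by_cases h : G.Adj v₀ u <;> simp [h, abs_of_nonneg]
      refine h3.trans ?_
      have h4 : ∑ u, (if G.Adj v₀ u then |x u| else 0) ≤ ∑ u, (if G.Adj v₀ u then m * c u else 0) := by
        apply Finset.sum_le_sum
        intro u _
        by_cases h : G.Adj v₀ u <;> simp [h, hmle u]
      refine h4.trans ?_
      have h5 : ∑ u, (if G.Adj v₀ u then m * c u else 0) = m * ∑ u, (if G.Adj v₀ u then c u else 0) := by
        rw [Finset.mul_sum]
        apply Finset.sum_congr rfl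
        intro u _
        by_cases h : G.Adj v₀ u <;> simp [h]
      rw [h5]
      exact mul_le_mul_of_nonneg_left (hrow v₀) hmpos.le
    calc |lam| * (m * c v₀) = |lam| * |x v₀| := by
          rw [hm, div_mul_cancel₀ _ (hc v₀).ne']
    _ ≤ m * (b * c v₀) := h1
  have : |lam| ≤ b := by
    have hpos : 0 < m * c v₀ := mul_pos hmpos (hc v₀)
    nlinarith [abs_nonneg lam]
  exact (le_abs_self lam).trans this


def Rr (a : ℕ) (i j : ℕ) : Prop :=
  (i < a ∧ (j = a ∨ j = a + 1)) ∨ (i = 0 ∧ a + 2 ≤ j) ∨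
  (a + 2 ≤ i ∧ a + 2 ≤ j ∧ (i - (a + 2)) / 2 = (j - (a + 2)) / 2)

instance (a i j : ℕ) : Decidable (Rr a i j) := by unfold Rr; infer_instance

def cc (a : ℕ) (x y z w : ℝ) (j : ℕ) : ℝ :=
  if j = 0 then x else if j < a then y else if j < a + 2 then z else w

def gfun (a : ℕ) (x y z w : ℝ) (i : ℕ) (j : ℕ) : ℝ :=
  if (i ≠ j ∧ (Rr a i j ∨ Rr a j i)) then cc a x y z w j else 0

lemma KdotF_adj_iff (a k : ℕ) (u w : Fin (a + 2 + 2 * k)) :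
    (KdotF a k).Adj u w ↔ (u.val ≠ w.val ∧ (Rr a u.val w.val ∨ Rr a w.val u.val)) := by
  rw [KdotF, SimpleGraph.fromRel_adj]
  unfold Rr
  constructor
  · rintro ⟨h1, h2⟩; exact ⟨fun h => h1 (Fin.ext h), h2⟩
  · rintro ⟨h1, h2⟩; exact ⟨fun h => h1 (congrArg Fin.val h), h2⟩

lemma rowsum_lemma (a k : ℕ) (ha : 2 ≤ a) (x y z w : ℝ)
    [D : DecidableRel (KdotF a k).Adj] (v : Fin (a + 2 + 2 * k)) :
    (∑ u, if (KdotF a k).Adj v u then cc a x y z w u.val else 0) =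
      if v.val = 0 then 2 * z + 2 * (k : ℝ) * w
      else if v.val < a then 2 * z
      else if v.val < a + 2 then x + ((a : ℝ) - 1) * y
      else x + w := by
  have hvN : v.val < a + 2 + 2 * k := v.isLt
  have h1 : (∑ u, if (KdotF a k).Adj v u then cc a x y z w u.val else 0)
      = ∑ j ∈ range (a + 2 + 2 * k), gfun a x y z w v.val j := by
    rw [← Fin.sum_univ_eq_sum_range (gfun a x y z w v.val) (a + 2 + 2 * k)]
    refine Finset.sum_congr rfl (fun u _ => ?_)
    unfold gfun
    exact if_congr (KdotF_adj_iff a k v u) rfl rfl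
  rw [h1, range_eq_Ico,
    ← Finset.sum_Ico_consecutive (gfun a x y z w v.val) (Nat.zero_le a)
      (show a ≤ a + 2 + 2 * k by omega),
    ← Finset.sum_Ico_consecutive (gfun a x y z w v.val) (show a ≤ a + 2 by omega)
      (show a + 2 ≤ a + 2 + 2 * k by omega)]
  by_cases h0 : v.val = 0
  · rw [if_pos h0]
    have p1 : ∑ j ∈ Ico 0 a, gfun a x y z w v.val j = 0 := by
      refine Finset.sum_eq_zero (fun j hj => ?_)
      rw [mem_Ico] at hj
      unfold gfun; rw [if_neg]; unfold Rr; omega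
    have p2 : ∑ j ∈ Ico a (a + 2), gfun a x y z w v.val j = 2 * z := by
      have hpt : ∀ j ∈ Ico a (a + 2), gfun a x y z w v.val j = z := by
        intro j hj
        rw [mem_Ico] at hj
        unfold gfun cc
        rw [if_pos (by unfold Rr; omega), if_neg (by omega), if_neg (by omega),
          if_pos (by omega)]
      rw [Finset.sum_congr rfl hpt, Finset.sum_const, Nat.card_Ico,
        show a + 2 - a = 2 by omega, nsmul_eq_mul]
      norm_num
    have p3 : ∑ j ∈ Ico (a + 2) (a + 2 + 2 * k), gfun a x y z w v.val j = 2 * (k : ℝ) * w := by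
      have hpt : ∀ j ∈ Ico (a + 2) (a + 2 + 2 * k), gfun a x y z w v.val j = w := by
        intro j hj
        rw [mem_Ico] at hj
        unfold gfun cc
        rw [if_pos (by unfold Rr; omega), if_neg (by omega), if_neg (by omega),
          if_neg (by omega)]
      rw [Finset.sum_congr rfl hpt, Finset.sum_const, Nat.card_Ico,
        show a + 2 + 2 * k - (a + 2) = 2 * k by omega, nsmul_eq_mul]
      push_cast; ring
    rw [p1, p2, p3]; ring
  by_cases hlt : v.val < a
  · rw [if_neg h0, if_pos hlt]
    have p1 : ∑ j ∈ Ico 0 a, gfun a x y z w v.val j = 0 := by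
      refine Finset.sum_eq_zero (fun j hj => ?_)
      rw [mem_Ico] at hj
      unfold gfun; rw [if_neg]; unfold Rr; omega
    have p2 : ∑ j ∈ Ico a (a + 2), gfun a x y z w v.val j = 2 * z := by
      have hpt : ∀ j ∈ Ico a (a + 2), gfun a x y z w v.val j = z := by
        intro j hj
        rw [mem_Ico] at hj
        unfold gfun cc
        rw [if_pos (by unfold Rr; omega), if_neg (by omega), if_neg (by omega),
          if_pos (by omega)]
      rw [Finset.sum_congr rfl hpt, Finset.sum_const, Nat.card_Ico,
        show a + 2 - a = 2 by omega, nsmul_eq_mul]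
      norm_num
    have p3 : ∑ j ∈ Ico (a + 2) (a + 2 + 2 * k), gfun a x y z w v.val j = 0 := by
      refine Finset.sum_eq_zero (fun j hj => ?_)
      rw [mem_Ico] at hj
      unfold gfun; rw [if_neg]; unfold Rr; omega
    rw [p1, p2, p3]; ring
  by_cases h2 : v.val < a + 2
  · rw [if_neg h0, if_neg hlt, if_pos h2]
    have p1 : ∑ j ∈ Ico 0 a, gfun a x y z w v.val j = x + ((a : ℝ) - 1) * y := by
      rw [← Finset.sum_Ico_consecutive (gfun a x y z w v.val) (Nat.zero_le 1)
        (show 1 ≤ a by omega)]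
      have q1 : ∑ j ∈ Ico 0 1, gfun a x y z w v.val j = x := by
        rw [show Ico 0 1 = {0} from rfl, Finset.sum_singleton]
        unfold gfun cc
        rw [if_pos (by unfold Rr; omega), if_pos rfl]
      have q2 : ∑ j ∈ Ico 1 a, gfun a x y z w v.val j = ((a : ℝ) - 1) * y := by
        have hpt : ∀ j ∈ Ico 1 a, gfun a x y z w v.val j = y := by
          intro j hj
          rw [mem_Ico] at hj
          unfold gfun cc
          rw [if_pos (by unfold Rr; omega), if_neg (by omega), if_pos (by omega)]
        rw [Finset.sum_congr rfl hpt, Finset.sum_const, Nat.card_Ico, nsmul_eq_mul]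
        congr 1
        push_cast [Nat.cast_sub (show 1 ≤ a by omega)]
        ring
      rw [q1, q2]
    have p2 : ∑ j ∈ Ico a (a + 2), gfun a x y z w v.val j = 0 := by
      refine Finset.sum_eq_zero (fun j hj => ?_)
      rw [mem_Ico] at hj
      unfold gfun; rw [if_neg]; unfold Rr; omega
    have p3 : ∑ j ∈ Ico (a + 2) (a + 2 + 2 * k), gfun a x y z w v.val j = 0 := by
      refine Finset.sum_eq_zero (fun j hj => ?_)
      rw [mem_Ico] at hj
      unfold gfun; rw [if_neg]; unfold Rr; omega
    rw [p1, p2, p3]; ring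
  · rw [if_neg h0, if_neg hlt, if_neg h2]
    push_neg at h2
    have p1 : ∑ j ∈ Ico 0 a, gfun a x y z w v.val j = x := by
      rw [← Finset.sum_Ico_consecutive (gfun a x y z w v.val) (Nat.zero_le 1)
        (show 1 ≤ a by omega)]
      have q1 : ∑ j ∈ Ico 0 1, gfun a x y z w v.val j = x := by
        rw [show Ico 0 1 = {0} from rfl, Finset.sum_singleton]
        unfold gfun cc
        rw [if_pos (by unfold Rr; omega), if_pos rfl]
      have q2 : ∑ j ∈ Ico 1 a, gfun a x y z w v.val j = 0 := by
        refine Finset.sum_eq_zero (fun j hj => ?_)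
        rw [mem_Ico] at hj
        unfold gfun; rw [if_neg]; unfold Rr; omega
      rw [q1, q2, add_zero]
    have p2 : ∑ j ∈ Ico a (a + 2), gfun a x y z w v.val j = 0 := by
      refine Finset.sum_eq_zero (fun j hj => ?_)
      rw [mem_Ico] at hj
      unfold gfun; rw [if_neg]; unfold Rr; omega
    have p3 : ∑ j ∈ Ico (a + 2) (a + 2 + 2 * k), gfun a x y z w v.val j = w := by
      by_cases hpar : (v.val - (a + 2)) % 2 = 0
      · have hmem : v.val + 1 ∈ Ico (a + 2) (a + 2 + 2 * k) := by
          rw [mem_Ico]; omega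
        have hpt : ∀ j ∈ Ico (a + 2) (a + 2 + 2 * k),
            gfun a x y z w v.val j = if j = v.val + 1 then w else 0 := by
          intro j hj
          rw [mem_Ico] at hj
          have hcond : (v.val ≠ j ∧ (Rr a v.val j ∨ Rr a j v.val)) ↔ j = v.val + 1 := by
            unfold Rr; omega
          unfold gfun
          rw [if_congr hcond rfl rfl]
          by_cases hj1 : j = v.val + 1
          · rw [if_pos hj1, if_pos hj1]
            unfold cc
            rw [if_neg (by omega), if_neg (by omega), if_neg (by omega)]
          · rw [if_neg hj1, if_neg hj1]
        rw [Finset.sum_congr rfl hpt,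
          Finset.sum_ite_eq' (Ico (a + 2) (a + 2 + 2 * k)) (v.val + 1) (fun _ => w),
          if_pos hmem]
      · have hmem : v.val - 1 ∈ Ico (a + 2) (a + 2 + 2 * k) := by
          rw [mem_Ico]; omega
        have hpt : ∀ j ∈ Ico (a + 2) (a + 2 + 2 * k),
            gfun a x y z w v.val j = if j = v.val - 1 then w else 0 := by
          intro j hj
          rw [mem_Ico] at hj
          have hcond : (v.val ≠ j ∧ (Rr a v.val j ∨ Rr a j v.val)) ↔ j = v.val - 1 := by
            unfold Rr; omega
          unfold gfun
          rw [if_congr hcond rfl rfl]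
          by_cases hj1 : j = v.val - 1
          · rw [if_pos hj1, if_pos hj1]
            unfold cc
            rw [if_neg (by omega), if_neg (by omega), if_neg (by omega)]
          · rw [if_neg hj1, if_neg hj1]
        rw [Finset.sum_congr rfl hpt,
          Finset.sum_ite_eq' (Ico (a + 2) (a + 2 + 2 * k)) (v.val - 1) (fun _ => w),
          if_pos hmem]
    rw [p1, p2, p3]
    ring


theorem stmt_17 (n a k : ℕ) (hn : 6 ≤ n) (ha : 2 ≤ a) (hk : 1 ≤ k)
    (hnak : n = a + 2 + 2 * k) :
    specRad (KdotF a k) < Real.sqrt (2 * n - 4) := by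
  subst hnak
  letI : DecidableRel (KdotF a k).Adj := Classical.decRel _
  haveI : Nonempty (Fin (a + 2 + 2 * k)) := ⟨⟨0, by omega⟩⟩
  have hA2 : (2 : ℝ) ≤ (a : ℝ) := by exact_mod_cast ha
  have hK1 : (1 : ℝ) ≤ (k : ℝ) := by exact_mod_cast hk
  set s := Real.sqrt (2 * (a : ℝ) + 4 * (k : ℝ)) with hsdef
  have htarget : Real.sqrt (2 * ((a + 2 + 2 * k : ℕ) : ℝ) - 4) = s := by
    rw [hsdef]; congr 1; push_cast; ring
  rw [htarget]
  have hsq : s ^ 2 = 2 * (a : ℝ) + 4 * (k : ℝ) :=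
    Real.sq_sqrt (by linarith)
  have hs0 : 0 ≤ s := Real.sqrt_nonneg _
  have hs2 : 2 < s := by nlinarith
  have hslt : s < 2 * (a : ℝ) + 2 * (k : ℝ) - 1 := by
    rw [hsdef]
    rw [Real.sqrt_lt' (by linarith)]
    nlinarith
  have hT : 0 < s ^ 2 - s - (2 * (k : ℝ) + 1) := by rw [hsq]; linarith
  have hspos : 0 < s := by linarith
  have hApos : 0 < (a : ℝ) := by linarith
  have hs1 : 0 < s - 1 := by linarith
  have hss1 : 0 < s * (s - 1) := mul_pos hspos hs1
  set E := 2 * (k : ℝ) * (s ^ 2 - s - (2 * (k : ℝ) + 1)) with hEdef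
  have hEpos : 0 < E := by rw [hEdef]; exact mul_pos (by linarith) hT
  set ww := 2 * s * (a : ℝ) * (2 * (k : ℝ) + 1) with hwwdef
  set xx := 2 * s * (a : ℝ) * (2 * (k : ℝ) + 1) * (s - 1) - (a : ℝ) * E with hxxdef
  set yy := 2 * s * (a : ℝ) * (s - 1) + E with hyydef
  set zz := (a : ℝ) * s ^ 2 * (s - 1) with hzzdef
  have hwwpos : 0 < ww := by
    rw [hwwdef]
    exact mul_pos (mul_pos (mul_pos (by norm_num) hspos) hApos) (by linarith)
  have hxxpos : 0 < xx := by
    have hxx2 : xx = (a : ℝ) * (s * (s - 1) * (2 * (k : ℝ) + 2) + 2 * (k : ℝ) * (2 * (k : ℝ) + 1)) := by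
      rw [hxxdef, hEdef]; ring
    have h1 : 0 < s * (s - 1) * (2 * (k : ℝ) + 2) + 2 * (k : ℝ) * (2 * (k : ℝ) + 1) := by
      nlinarith
    rw [hxx2]
    exact mul_pos hApos h1
  have hyypos : 0 < yy := by
    rw [hyydef]
    nlinarith [mul_pos hApos hss1, hEpos]
  have hzzpos : 0 < zz := by
    rw [hzzdef]
    exact mul_pos (mul_pos hApos (pow_pos hspos 2)) hs1
  have R1 : 2 * zz + 2 * (k : ℝ) * ww < s * xx := by
    have hid : s * xx - (2 * zz + 2 * (k : ℝ) * ww) = s * (a : ℝ) * E := by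
      rw [hxxdef, hzzdef, hwwdef, hEdef]; ring
    linarith [hid, mul_pos (mul_pos hspos hApos) hEpos]
  have R2 : 2 * zz < s * yy := by
    have hid : s * yy - 2 * zz = s * E := by
      rw [hyydef, hzzdef, hEdef]; ring
    linarith [hid, mul_pos hspos hEpos]
  have R3 : xx + ((a : ℝ) - 1) * yy < s * zz := by
    have hid : s * zz - (xx + ((a : ℝ) - 1) * yy) = E := by
      rw [hxxdef, hyydef, hzzdef]
      linear_combination ((a : ℝ) * s * (s - 1)) * hsq
    linarith
  have R4 : xx + ww < s * ww := by
    have hid : s * ww - (xx + ww) = (a : ℝ) * E := by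
      rw [hxxdef, hwwdef]; ring
    linarith [hid, mul_pos hApos hEpos]
  -- the weight function
  set c : Fin (a + 2 + 2 * k) → ℝ := fun u => cc a xx yy zz ww u.val with hcdef
  have hcpos : ∀ v, 0 < c v := by
    intro v
    rw [hcdef]
    unfold cc
    dsimp only
    split_ifs <;> [exact hxxpos; exact hyypos; exact hzzpos; exact hwwpos]
  have key : ∀ v : Fin (a + 2 + 2 * k),
      (∑ u, if (KdotF a k).Adj v u then c u else 0) < s * c v := by
    intro v
    rw [hcdef]
    dsimp only
    rw [rowsum_lemma a k ha xx yy zz ww v]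
    unfold cc
    by_cases h0 : v.val = 0
    · rw [if_pos h0, if_pos h0]; exact R1
    by_cases hlt : v.val < a
    · rw [if_neg h0, if_pos hlt, if_neg h0, if_pos hlt]; exact R2
    by_cases h2 : v.val < a + 2
    · rw [if_neg h0, if_neg hlt, if_pos h2, if_neg h0, if_neg hlt, if_pos h2]; exact R3
    · rw [if_neg h0, if_neg hlt, if_neg h2, if_neg h0, if_neg hlt, if_neg h2]; exact R4
  set b := Finset.univ.sup' Finset.univ_nonempty
    (fun v : Fin (a + 2 + 2 * k) =>
      (∑ u, if (KdotF a k).Adj v u then c u else 0) / c v) with hbdef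
  have hratio_nonneg : ∀ v : Fin (a + 2 + 2 * k),
      0 ≤ (∑ u, if (KdotF a k).Adj v u then c u else 0) / c v := by
    intro v
    apply div_nonneg _ (hcpos v).le
    apply Finset.sum_nonneg
    intro u _
    split_ifs
    · exact (hcpos u).le
    · exact le_refl 0
  have hb0 : 0 ≤ b := by
    rw [hbdef]
    exact le_trans (hratio_nonneg (Classical.arbitrary _))
      (Finset.le_sup' (fun v : Fin (a + 2 + 2 * k) =>
      (∑ u, if (KdotF a k).Adj v u then c u else 0) / c v) (Finset.mem_univ _))
  have hbs : b < s := by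
    rw [hbdef, Finset.sup'_lt_iff]
    intro v _
    rw [div_lt_iff₀ (hcpos v)]
    exact key v
  have hble : ∀ v : Fin (a + 2 + 2 * k),
      (∑ u, if (KdotF a k).Adj v u then c u else 0) ≤ b * c v := by
    intro v
    rw [← div_le_iff₀ (hcpos v)]
    exact Finset.le_sup' (fun v : Fin (a + 2 + 2 * k) =>
      (∑ u, if (KdotF a k).Adj v u then c u else 0) / c v) (Finset.mem_univ v)
  unfold specRad
  refine lt_of_le_of_lt (@specRad_le_of_weights _ (Fintype.ofFinite _) (Classical.decEq _) _
    (KdotF a k) (Classical.decRel _) c hcpos b hb0 ?_) hbs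
  intro v
  rw [Subsingleton.elim (Fintype.ofFinite (Fin (a + 2 + 2 * k))) (Fin.fintype _)]
  exact hble v
end
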